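/- For all integers n ≥ 1, the determinant D(2n+1, n+1, 0, 3) equals 1/(2n+1) · C(3n, n), where the equality is of rational numbers. -/

import Mathlib

/-- Binomial coefficient `C(a,b)` for integers, with the convention that it is `0` when `b < 0`. -/
def ichoose (a b : ℤ) : ℤ := if 0 ≤ b then (a.toNat.choose b.toNat : ℤ) else 0

/-- The determinant `D(m,n,u,k)` of the `(n-1)×(n-1)` matrix with `(i,j)` entry
`C(m - max{u, (k-1)j}, 1 - i + j)` for `i, j = 1, …, n-1`. -/
def D (m n u k : ℤ) : ℤ :=
  Matrix.det (Matrix.of fun i j : Fin (n - 1).toNat =>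
    ichoose (m - max u ((k - 1) * ((j : ℤ) + 1))) (1 - ((i : ℤ) + 1) + ((j : ℤ) + 1)))

/-!
Replace the lower index `j + 1` in the top row of the matrix of `D(2N+1, N+1, 0, 3)` by `j + s`,
and call the determinant `F(N, s)` (`shiftedDet N s`). Expanding along the first column gives
`F(N+2, s) = C(2N+3, s) F(N+1, 1) - F(N+1, s+1)`. From this and the absorption identities for
binomial coefficients, induction on `N` yields a second relation between `F(N+1, s)`,
`F(N+1, s+1)` and `F(N+2, s)`; at `s = 1` the two relations eliminate `F(N+1, 2)` and leave
`F(N+1, 1) / F(N, 1) = 3(3N+2)(3N+1) / (2(N+1)(2N+3))`, the ratio of consecutive values of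
`C(3N, N) / (2N+1)`.
-/

lemma ichoose_of_neg {a b : ℤ} (h : b < 0) : ichoose a b = 0 := by
  simp [ichoose, h.not_ge]

lemma ichoose_natCast (a b : ℕ) : ichoose a b = a.choose b := by
  simp [ichoose]

lemma ichoose_zero_right (a : ℤ) : ichoose a 0 = 1 := by
  simp [ichoose]

lemma ichoose_one_right {a : ℤ} (h : 0 ≤ a) : ichoose a 1 = a := by
  simp [ichoose, h]

lemma ichoose_of_lt {a b : ℤ} (ha : 0 ≤ a) (h : a < b) : ichoose a b = 0 := by
  lift a to ℕ using ha
  lift b to ℕ using by omega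
  rw [ichoose_natCast, Nat.choose_eq_zero_of_lt (by omega), Nat.cast_zero]

lemma natCast_sub_mul_choose (n k : ℕ) :
    ((n : ℤ) - k) * n.choose k = ((n - k : ℕ) : ℤ) * n.choose k := by
  rcases le_or_gt k n with h | h
  · rw [Nat.cast_sub h]
  · simp [Nat.choose_eq_zero_of_lt h]

lemma succ_mul_ichoose_succ {a s : ℤ} (ha : 0 ≤ a) (hs : 0 ≤ s) :
    (s + 1) * ichoose a (s + 1) = (a - s) * ichoose a s := by
  lift a to ℕ using ha
  lift s to ℕ using hs
  rw [← Nat.cast_succ, ichoose_natCast, ichoose_natCast, natCast_sub_mul_choose]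
  norm_cast
  rw [mul_comm, Nat.choose_succ_right_eq, mul_comm]

lemma sub_mul_ichoose {a s : ℤ} (ha : 0 ≤ a) (hs : 0 ≤ s) :
    (a + 1 - s) * ichoose (a + 1) s = (a + 1) * ichoose a s := by
  lift a to ℕ using ha
  lift s to ℕ using hs
  rw [← Nat.cast_succ, ichoose_natCast, ichoose_natCast, natCast_sub_mul_choose]
  norm_cast
  rw [mul_comm, ← Nat.choose_mul_succ_eq, mul_comm]

lemma ternary_choose_succ (n : ℕ) :
    2 * (n + 1) * (2 * n + 1) * (3 * n + 3).choose (n + 1)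
      = 3 * (3 * n + 2) * (3 * n + 1) * (3 * n).choose n := by
  have h₁ := Nat.add_one_mul_choose_eq (3 * n + 2) n
  have h₂ := Nat.choose_mul_succ_eq (3 * n + 1) n
  have h₃ := Nat.choose_mul_succ_eq (3 * n) n
  rw [show 3 * n + 1 + 1 - n = 2 * n + 2 by omega] at h₂
  rw [show 3 * n + 1 - n = 2 * n + 1 by omega] at h₃
  zify at h₁ h₂ h₃ ⊢
  linear_combination
    -2 * (2 * (n : ℤ) + 1) * h₁ - 3 * (2 * (n : ℤ) + 1) * h₂ - 3 * (3 * n + 2) * h₃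

def shiftedMatrix (N : ℕ) (s : ℤ) : Matrix (Fin N) (Fin N) ℤ :=
  Matrix.of fun i j => ichoose (2 * N - 1 - 2 * j) (if (i : ℕ) = 0 then j + s else j - i + 1)

def shiftedDet (N : ℕ) (s : ℤ) : ℤ := (shiftedMatrix N s).det

lemma shiftedDet_one (s : ℤ) : shiftedDet 1 s = ichoose 1 s := by
  simp [shiftedDet, shiftedMatrix]

lemma shiftedMatrix_submatrix_succ_succ (K : ℕ) (s : ℤ) :
    (shiftedMatrix (K + 2) s).submatrix Fin.succ Fin.succ = shiftedMatrix (K + 1) 1 := by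
  ext i j
  simp only [shiftedMatrix, Matrix.submatrix_apply, Matrix.of_apply, Fin.val_succ]
  refine Fin.cases ?_ (fun i => ?_) i <;> simp <;> ring_nf

lemma shiftedMatrix_submatrix_one_succAbove (K : ℕ) (s : ℤ) :
    (shiftedMatrix (K + 2) s).submatrix (Fin.succAbove 1) Fin.succ
      = shiftedMatrix (K + 1) (s + 1) := by
  ext i j
  simp only [shiftedMatrix, Matrix.submatrix_apply, Matrix.of_apply, Fin.val_succ]
  refine Fin.cases ?_ (fun i => ?_) i <;> simp <;> ring_nf

lemma shiftedDet_add_two (K : ℕ) (s : ℤ) :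
    shiftedDet (K + 2) s
      = ichoose (2 * K + 3) s * shiftedDet (K + 1) 1 - shiftedDet (K + 1) (s + 1) := by
  have h₀ : shiftedMatrix (K + 2) s 0 0 = ichoose (2 * K + 3) s := by
    simp only [shiftedMatrix, Matrix.of_apply, Fin.val_zero, if_true, Nat.cast_zero]
    congr 1 <;> push_cast <;> ring
  have h₁ : shiftedMatrix (K + 2) s 1 0 = 1 := by
    simp [shiftedMatrix, ichoose_zero_right]
  have hlower (i : Fin K) : shiftedMatrix (K + 2) s i.succ.succ 0 = 0 := by
    simp only [shiftedMatrix, Matrix.of_apply]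
    exact ichoose_of_neg (by simp only [Fin.val_succ, Fin.val_zero]; push_cast; omega)
  rw [shiftedDet, Matrix.det_succ_column_zero, Fin.sum_univ_succ, Fin.sum_univ_succ,
    Fin.succ_zero_eq_one, Fin.succAbove_zero, shiftedMatrix_submatrix_succ_succ,
    shiftedMatrix_submatrix_one_succAbove, h₀, h₁]
  simp [hlower, shiftedDet, sub_eq_add_neg]

lemma D_eq_shiftedDet (N : ℕ) : D (2 * N + 1) (N + 1) 0 3 = shiftedDet N 1 := by
  have hN : ((N : ℤ) + 1 - 1).toNat = N := by omega
  rw [D, shiftedDet, ← Matrix.det_reindex_self (finCongr hN)]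
  congr 1
  ext i j
  simp only [Matrix.reindex_apply, Matrix.submatrix_apply, Matrix.of_apply, shiftedMatrix,
    finCongr_symm, finCongr_apply, Fin.val_cast]
  congr 1
  · omega
  · split_ifs <;> omega

lemma shiftedDet_recurrence (M : ℕ) {s : ℤ} (hs : 1 ≤ s) :
    3 * (M + s + 1) * (M + s) * shiftedDet (M + 1) s
      + 3 * s * (s + 4 * M + 5) * shiftedDet (M + 1) (s + 1)
      = (2 * M + 3 - s) * (2 * M + 2 - s) * shiftedDet (M + 2) s := by
  induction M generalizing s with
  | zero =>
    have h₁ : shiftedDet 1 1 = 1 := by rw [shiftedDet_one, ichoose_one_right zero_le_one]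
    have h₀ : ichoose 1 (s + 1) = 0 := ichoose_of_lt zero_le_one (by omega)
    rw [shiftedDet_add_two, h₁, shiftedDet_one, shiftedDet_one, h₀]
    simp only [Nat.cast_zero, mul_zero, zero_add]
    obtain rfl | hs := hs.eq_or_lt
    · norm_num [ichoose_one_right]
    · have h₃ := sub_mul_ichoose (a := 2) (s := s) (by norm_num) (by omega)
      have h₂ := sub_mul_ichoose (a := 1) (s := s) (by norm_num) (by omega)
      rw [ichoose_of_lt zero_le_one hs] at h₂ ⊢
      norm_num only at h₂ h₃
      linear_combination -(2 - s) * h₃ - 3 * h₂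
  | succ M ih =>
    have e₁ : shiftedDet (M + 3) s
        = ichoose (2 * M + 5) s * shiftedDet (M + 2) 1 - shiftedDet (M + 2) (s + 1) := by
      convert shiftedDet_add_two (M + 1) s using 4
      push_cast; ring
    have e₂ := shiftedDet_add_two M s
    have e₃ := shiftedDet_add_two M (s + 1)
    have e₄ := shiftedDet_add_two M 1
    have r₁ := ih (s := s + 1) (by omega)
    have r₂ := ih (s := 1) le_rfl
    have a₁ := sub_mul_ichoose (a := 2 * M + 4) (s := s) (by omega) (by omega)
    have a₂ := sub_mul_ichoose (a := 2 * M + 3) (s := s) (by omega) (by omega)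
    have a₃ := succ_mul_ichoose_succ (a := 2 * M + 3) (s := s) (by omega) (by omega)
    rw [ichoose_one_right (by omega)] at e₄
    have ratio : 2 * ((M : ℤ) + 2) * (2 * M + 5) * shiftedDet (M + 2) 1
        = 3 * (3 * (M : ℤ) + 5) * (3 * M + 4) * shiftedDet (M + 1) 1 := by
      linear_combination -r₂ + 3 * (4 * (M : ℤ) + 6) * e₄
    rw [show (2 : ℤ) * M + 4 + 1 = 2 * M + 5 by ring] at a₁
    rw [show (2 : ℤ) * M + 3 + 1 = 2 * M + 4 by ring] at a₂
    rw [show M + 1 + 1 = M + 2 from rfl, show M + 1 + 2 = M + 3 from rfl]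
    push_cast
    linear_combination (-(2 * (M : ℤ) + 5 - s) * (2 * M + 4 - s)) * e₁
      + 3 * ((M : ℤ) + s + 2) * (M + s + 1) * e₂
      + 3 * (s + 1) * (s + 4 * (M : ℤ) + 6) * e₃
      - r₁
      - shiftedDet (M + 2) 1 * (2 * (M : ℤ) + 4 - s) * a₁
      - shiftedDet (M + 2) 1 * (2 * (M : ℤ) + 5) * a₂
      + 3 * (s + 4 * (M : ℤ) + 6) * shiftedDet (M + 1) 1 * a₃
      - ichoose (2 * (M : ℤ) + 3) s * ratio

lemma shiftedDet_zero (s : ℤ) : shiftedDet 0 s = 1 :=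
  Matrix.det_isEmpty

lemma shiftedDet_succ_one (N : ℕ) :
    2 * (N + 1) * (2 * N + 3) * shiftedDet (N + 1) 1
      = 3 * (3 * N + 2) * (3 * N + 1) * shiftedDet N 1 := by
  cases N with
  | zero => simp [shiftedDet_one, shiftedDet_zero, ichoose_one_right]
  | succ M =>
    have e := shiftedDet_add_two M 1
    have r := shiftedDet_recurrence M le_rfl
    rw [ichoose_one_right (by omega)] at e
    push_cast
    linear_combination -r + 3 * (4 * (M : ℤ) + 6) * e

lemma two_mul_add_one_mul_shiftedDet_one (N : ℕ) :
    (2 * N + 1) * shiftedDet N 1 = (3 * N).choose N := by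
  induction N with
  | zero => simp [shiftedDet_zero]
  | succ N ih =>
    have hc : ((2 * (N + 1) * (2 * N + 1) * (3 * N + 3).choose (N + 1) : ℕ) : ℤ)
        = ((3 * (3 * N + 2) * (3 * N + 1) * (3 * N).choose N : ℕ) : ℤ) :=
      congrArg _ (ternary_choose_succ N)
    push_cast at hc ⊢
    apply mul_left_cancel₀ (show 2 * ((N : ℤ) + 1) * (2 * N + 1) ≠ 0 by positivity)
    linear_combination (2 * (N : ℤ) + 1) * shiftedDet_succ_one N
      + 3 * (3 * (N : ℤ) + 2) * (3 * N + 1) * ih - hc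

theorem det_eq_ternary (n : ℤ) (hn : 1 ≤ n) :
    (D (2 * n + 1) (n + 1) 0 3 : ℚ) = 1 / (2 * (n : ℚ) + 1) * (ichoose (3 * n) n : ℚ) := by
  lift n to ℕ using by omega
  have h := two_mul_add_one_mul_shiftedDet_one n
  rw [D_eq_shiftedDet, show (3 : ℤ) * n = (3 * n : ℕ) by norm_cast, ichoose_natCast, ← h]
  push_cast
  field_simp
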